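/- arXiv:2110.03288 — 4 statements merged into one kernel-verified Lean document; each statement's English description precedes it below -/
import Mathlib

section
/- Let σ ∈ (1/2, 1) be fixed. There exists a constant C(σ) such that for every real k ≥ 2 and every prime p with p ≤ k^{1/σ}, one has Σ_{ν ≥ 0} d_{k/2}(p^ν)²/p^{2νσ} = exp(θ) for some real θ with |θ| ≤ C(σ)·k/p^{σ}. -/
open MeasureTheory Real

/-- The generalized divisor function at prime powers:
`d_z(p^ν) = Γ(z+ν)/(Γ(z) ν!)`. -/
noncomputable def dzPow (z : ℝ) (ν : ℕ) : ℝ :=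
  Real.Gamma (z + ν) / (Real.Gamma z * Nat.factorial ν)

/-!
With `y = p^{-σ}` the sum is `S = ∑ b_ν²`, where `b_ν = d_z(p^ν) y^ν` and `z = k/2`.
Since `d_z(p^ν)` is increasing in `z`, it is at most `d_{n+1}(p^ν) = binom(ν+n, n)` for
`n = ⌊z⌋`, so `∑ b_ν ≤ (1-y)^{-(n+1)}`. Hence `1 ≤ S ≤ (∑ b_ν)² ≤ (1-y)^{-2(n+1)}`,
and `0 ≤ log S ≤ 2(n+1) y/(1-y) ≤ 8 k p^{-σ}`, using `y ≤ 2^{-1/2} < 3/4` because `σ > 1/2`.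
-/

section SumOfSquares

variable {ι : Type*} {f : ι → ℝ} (hf : ∀ i, 0 ≤ f i) (hs : Summable f)
include hf hs

lemma sq_le_mul_tsum_of_nonneg (i : ι) : f i ^ 2 ≤ f i * ∑' j, f j := by
  rw [sq]
  exact mul_le_mul_of_nonneg_left (hs.le_tsum i fun j _ ↦ hf j) (hf i)

lemma summable_sq_of_nonneg : Summable fun i ↦ f i ^ 2 :=
  .of_nonneg_of_le (fun i ↦ sq_nonneg (f i)) (sq_le_mul_tsum_of_nonneg hf hs) (hs.mul_right _)

lemma tsum_sq_le_sq_tsum : ∑' i, f i ^ 2 ≤ (∑' i, f i) ^ 2 := by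
  rw [sq, ← tsum_mul_right]
  exact (summable_sq_of_nonneg hf hs).tsum_le_tsum (sq_le_mul_tsum_of_nonneg hf hs)
    (hs.mul_right _)

end SumOfSquares

lemma dzPow_zero {z : ℝ} (hz : 0 < z) : dzPow z 0 = 1 := by
  simp [dzPow, (Gamma_pos_of_pos hz).ne']

lemma dzPow_succ {z : ℝ} (hz : 0 < z) (ν : ℕ) :
    dzPow z (ν + 1) = dzPow z ν * ((z + ν) / (ν + 1)) := by
  have hGamma : Gamma (z + (ν + 1 : ℕ)) = (z + ν) * Gamma (z + ν) := by
    rw [Nat.cast_succ, ← add_assoc, Gamma_add_one (by positivity)]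
  have hGz : Gamma z ≠ 0 := (Gamma_pos_of_pos hz).ne'
  rw [dzPow, dzPow, hGamma, Nat.factorial_succ, Nat.cast_mul, Nat.cast_succ]
  field_simp

lemma dzPow_nonneg {z : ℝ} (hz : 0 < z) (ν : ℕ) : 0 ≤ dzPow z ν := by
  induction ν with
  | zero => rw [dzPow_zero hz]; exact zero_le_one
  | succ ν ih => rw [dzPow_succ hz]; positivity

lemma dzPow_le_dzPow {z w : ℝ} (hz : 0 < z) (hzw : z ≤ w) (ν : ℕ) :
    dzPow z ν ≤ dzPow w ν := by
  have hw : 0 < w := hz.trans_le hzw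
  induction ν with
  | zero => rw [dzPow_zero hz, dzPow_zero hw]
  | succ ν ih =>
    rw [dzPow_succ hz, dzPow_succ hw]
    gcongr
    exact dzPow_nonneg hw ν

lemma dzPow_natCast_add_one (n ν : ℕ) : dzPow (n + 1) ν = (ν + n).choose n := by
  have hsum : (n : ℝ) + 1 + ν = ((ν + n : ℕ) : ℝ) + 1 := by push_cast; ring
  rw [dzPow, hsum, Gamma_nat_eq_factorial, Gamma_nat_eq_factorial,
    Nat.cast_choose ℝ (Nat.le_add_left n ν), Nat.add_sub_cancel, mul_comm]

lemma dzPow_le_choose {z : ℝ} (hz : 0 < z) {n : ℕ} (hzn : z ≤ n + 1) (ν : ℕ) :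
    dzPow z ν ≤ (ν + n).choose n :=
  dzPow_natCast_add_one n ν ▸ dzPow_le_dzPow hz hzn ν

lemma dzPow_mul_pow_nonneg {z y : ℝ} (hz : 0 < z) (hy₀ : 0 ≤ y) (ν : ℕ) :
    0 ≤ dzPow z ν * y ^ ν :=
  mul_nonneg (dzPow_nonneg hz ν) (pow_nonneg hy₀ ν)

section GeneratingSeries

variable {z y : ℝ} (hz : 0 < z) (hy₀ : 0 ≤ y) (hy₁ : y < 1) {n : ℕ} (hzn : z ≤ n + 1)
include hz hy₀ hy₁ hzn

lemma summable_dzPow_mul_pow : Summable fun ν ↦ dzPow z ν * y ^ ν :=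
  Summable.of_nonneg_of_le (dzPow_mul_pow_nonneg hz hy₀)
    (fun ν ↦ by gcongr; exact dzPow_le_choose hz hzn ν)
    (summable_choose_mul_geometric_of_norm_lt_one n (by rwa [norm_of_nonneg hy₀]))

lemma tsum_dzPow_mul_pow_le : ∑' ν, dzPow z ν * y ^ ν ≤ 1 / (1 - y) ^ (n + 1) := by
  have hy : ‖y‖ < 1 := by rwa [norm_of_nonneg hy₀]
  rw [← tsum_choose_mul_geometric_of_norm_lt_one n hy]
  exact Summable.tsum_le_tsum (fun ν ↦ by gcongr; exact dzPow_le_choose hz hzn ν)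
    (summable_dzPow_mul_pow hz hy₀ hy₁ hzn) (summable_choose_mul_geometric_of_norm_lt_one n hy)

lemma one_le_tsum_sq_dzPow_mul_pow : 1 ≤ ∑' ν, (dzPow z ν * y ^ ν) ^ 2 := by
  have hsum := summable_sq_of_nonneg (dzPow_mul_pow_nonneg hz hy₀)
    (summable_dzPow_mul_pow hz hy₀ hy₁ hzn)
  simpa [dzPow_zero hz] using hsum.le_tsum 0 (fun ν _ ↦ sq_nonneg _)

lemma log_tsum_sq_dzPow_mul_pow_le :
    log (∑' ν, (dzPow z ν * y ^ ν) ^ 2) ≤ 2 * (n + 1) * (y / (1 - y)) := by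
  have hy : 0 < 1 - y := by linarith
  have hS : 0 < ∑' ν, (dzPow z ν * y ^ ν) ^ 2 :=
    zero_lt_one.trans_le (one_le_tsum_sq_dzPow_mul_pow hz hy₀ hy₁ hzn)
  have hsq : ∑' ν, (dzPow z ν * y ^ ν) ^ 2 ≤ (1 / (1 - y) ^ (n + 1)) ^ 2 := by
    have hb := dzPow_mul_pow_nonneg hz hy₀
    calc ∑' ν, (dzPow z ν * y ^ ν) ^ 2
        ≤ (∑' ν, dzPow z ν * y ^ ν) ^ 2 :=
          tsum_sq_le_sq_tsum hb (summable_dzPow_mul_pow hz hy₀ hy₁ hzn)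
      _ ≤ (1 / (1 - y) ^ (n + 1)) ^ 2 := by
          gcongr
          · exact tsum_nonneg hb
          · exact tsum_dzPow_mul_pow_le hz hy₀ hy₁ hzn
  have hlog : -log (1 - y) ≤ y / (1 - y) := by
    have := one_sub_inv_le_log_of_pos hy
    rw [show y / (1 - y) = (1 - y)⁻¹ - 1 by field_simp; ring]
    linarith
  calc log (∑' ν, (dzPow z ν * y ^ ν) ^ 2)
      ≤ log ((1 / (1 - y) ^ (n + 1)) ^ 2) := log_le_log hS hsq
    _ = 2 * (n + 1) * -log (1 - y) := by
        rw [log_pow, one_div, log_inv, log_pow]; push_cast; ring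
    _ ≤ 2 * (n + 1) * (y / (1 - y)) := by gcongr

end GeneratingSeries

lemma rpow_neg_le_three_quarters {p σ : ℝ} (hp : 2 ≤ p) (hσ : 1 / 2 < σ) :
    p ^ (-σ) ≤ 3 / 4 := by
  have hsqrt : 4 / 3 ≤ √2 := by
    rw [le_sqrt (by norm_num) (by norm_num)]; norm_num
  have hpσ : 4 / 3 ≤ p ^ σ :=
    calc 4 / 3 ≤ √2 := hsqrt
      _ ≤ √p := sqrt_le_sqrt hp
      _ = p ^ (1 / 2 : ℝ) := sqrt_eq_rpow p
      _ ≤ p ^ σ := rpow_le_rpow_of_exponent_le (by linarith) hσ.le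
  rw [rpow_neg (by linarith), inv_le_comm₀ (by linarith) (by norm_num)]
  linarith

lemma dzPow_sq_div_rpow (z : ℝ) {p : ℝ} (hp : 0 < p) (σ : ℝ) (ν : ℕ) :
    dzPow z ν ^ 2 / p ^ (2 * (ν : ℝ) * σ) = (dzPow z ν * (p ^ (-σ)) ^ ν) ^ 2 := by
  rw [mul_pow, ← pow_mul, ← rpow_natCast (p ^ (-σ)), ← rpow_mul hp.le, div_eq_mul_inv,
    ← rpow_neg hp.le]
  push_cast
  ring_nf

theorem stmt5_general (σ : ℝ) (hσ : 1/2 < σ) :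
    ∃ C > (0:ℝ), ∀ k : ℝ, 2 ≤ k → ∀ p : ℕ, p.Prime → (p:ℝ) ≤ k ^ (1/σ) →
      ∃ θ : ℝ, |θ| ≤ C * k / (p:ℝ) ^ σ ∧
        (∑' ν : ℕ, dzPow (k/2) ν ^ 2 / (p:ℝ) ^ (2*(ν:ℝ)*σ)) = Real.exp θ := by
  refine ⟨8, by norm_num, fun k hk p hp _ ↦ ?_⟩
  have hp2 : (2 : ℝ) ≤ p := by exact_mod_cast hp.two_le
  set y := (p : ℝ) ^ (-σ)
  have hy₀ : 0 ≤ y := by positivity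
  have hy : y ≤ 3 / 4 := rpow_neg_le_three_quarters hp2 hσ
  have hz : 0 < k / 2 := by linarith
  have hzn : k / 2 ≤ ⌊k / 2⌋₊ + 1 := (Nat.lt_floor_add_one _).le
  have hnk : (⌊k / 2⌋₊ : ℝ) + 1 ≤ k := by linarith [Nat.floor_le hz.le]
  set S := ∑' ν, (dzPow (k / 2) ν * y ^ ν) ^ 2
  have hS : 1 ≤ S := one_le_tsum_sq_dzPow_mul_pow hz hy₀ (by linarith) hzn
  have hy₁ : 0 < 1 - y := by linarith
  have hratio : y / (1 - y) ≤ 4 * y := by rw [div_le_iff₀ hy₁]; nlinarith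
  have hlogS : log S ≤ 8 * k * y :=
    calc log S ≤ 2 * (⌊k / 2⌋₊ + 1) * (y / (1 - y)) :=
          log_tsum_sq_dzPow_mul_pow_le hz hy₀ (by linarith) hzn
      _ ≤ 2 * k * (4 * y) :=
          mul_le_mul (by linarith) hratio (div_nonneg hy₀ hy₁.le) (by linarith)
      _ = 8 * k * y := by ring
  refine ⟨log S, ?_, ?_⟩
  · rw [abs_of_nonneg (log_nonneg hS), div_eq_mul_inv, ← rpow_neg (by positivity)]
    exact hlogS
  · rw [exp_log (by linarith)]
    exact tsum_congr fun ν ↦ dzPow_sq_div_rpow _ (by positivity) σ ν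

theorem stmt5 (σ : ℝ) (hσ : 1/2 < σ) (hσ1 : σ < 1) :
    ∃ C > (0:ℝ), ∀ k : ℝ, 2 ≤ k → ∀ p : ℕ, p.Prime → (p:ℝ) ≤ k ^ (1/σ) →
      ∃ θ : ℝ, |θ| ≤ C * k / (p:ℝ) ^ σ ∧
        (∑' ν : ℕ, dzPow (k/2) ν ^ 2 / (p:ℝ) ^ (2*(ν:ℝ)*σ)) = Real.exp θ :=
  stmt5_general σ hσ
end

section
/- Let σ ∈ (1/2, 1) be fixed. Then for all real 2 ≤ y ≤ z, all T ≥ 2, and all integers k with 1 ≤ k ≤ (log T)/(3 log z), one has (1/T)∫_T^{2T} | Σ_{y ≤ p ≤ z, p prime} p^{−σ−it} |^{2k} dt ≪ ( k·Σ_{y ≤ p ≤ z, p prime} p^{−2σ} )^{k} + T^{−1/3}, where the implied constant depends at most on σ. -/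
/-!
Since `‖S(t)‖ ^ (2k) = ‖S(t) ^ k‖ ^ 2`, multiplying out turns `S(t) ^ k` into a Dirichlet
polynomial `∑ bₙ n ^ (-it)` over products `n ≤ z ^ k` of `k` primes from `[y, z]`. Distinct such `n`
satisfy `|log n - log m| ≥ z ^ (-k)`, so integrating the cross terms `(n / m) ^ (it)` gives the
crude mean value bound `∫ ≤ T ∑ |bₙ|² + 2 z ^ k (∑ |bₙ|)²`. By unique factorisation each `n` has
at most `k ^ k` representations, whence `∑ |bₙ|² ≤ k ^ k (∑ p ^ (-2σ)) ^ k`, and Cauchy–Schwarz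
gives `(∑ |bₙ|)² ≤ (z ∑ p ^ (-2σ)) ^ k`. Finally `z ^ (2k) ≤ T` because `k ≤ log T / (3 log z)`,
so the mean is at most `(k ^ k + 2) (∑ p ^ (-2σ)) ^ k`.
-/

open Finset
open Complex (I)
open ComplexConjugate
open Fintype (piFinset mem_piFinset)

theorem norm_intervalIntegral_exp_ofReal_mul_I_le {θ : ℝ} (hθ : θ ≠ 0) (a b : ℝ) :
    ‖∫ t in a..b, Complex.exp (↑(θ * t) * I)‖ ≤ 2 / |θ| := by
  have hc : (θ : ℂ) * I ≠ 0 := mul_ne_zero (by exact_mod_cast hθ) Complex.I_ne_zero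
  have hexp : ∀ t : ℝ, Complex.exp (↑(θ * t) * I) = Complex.exp (θ * I * t) := fun t => by
    push_cast; ring_nf
  simp_rw [hexp]
  rw [integral_exp_mul_complex hc, norm_div, norm_mul, Complex.norm_real, Complex.norm_I, mul_one,
    Real.norm_eq_abs]
  gcongr
  calc _ ≤ ‖Complex.exp (θ * I * b)‖ + ‖Complex.exp (θ * I * a)‖ := norm_sub_le _ _
    _ = 2 := by simp [Complex.norm_exp]; norm_num

theorem ofReal_norm_sum_mul_exp_sq {ι : Type*} (s : Finset ι) (b : ι → ℂ) (ω : ι → ℝ) (t : ℝ) :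
    ((‖∑ i ∈ s, b i * Complex.exp (↑(ω i * t) * I)‖ ^ 2 : ℝ) : ℂ)
      = ∑ i ∈ s, ∑ j ∈ s, b i * conj (b j) * Complex.exp (↑((ω i - ω j) * t) * I) := by
  rw [Complex.ofReal_pow, ← Complex.mul_conj', map_sum, sum_mul_sum]
  refine sum_congr rfl fun i _ => sum_congr rfl fun j _ => ?_
  rw [map_mul, ← Complex.exp_conj, map_mul, Complex.conj_ofReal, Complex.conj_I,
    mul_mul_mul_comm, ← Complex.exp_add]
  congr 2
  push_cast
  ring

theorem sum_sum_mul_mul_ite_add {ι R : Type*} [CommSemiring R] [DecidableEq ι] (s : Finset ι)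
    (a : ι → R) (T c : R) :
    ∑ i ∈ s, ∑ j ∈ s, a i * a j * ((if i = j then T else 0) + c)
      = T * ∑ i ∈ s, a i ^ 2 + c * (∑ i ∈ s, a i) ^ 2 := by
  simp only [mul_add, sum_add_distrib, mul_ite, mul_zero, sum_ite_eq, sum_ite_mem, inter_self]
  rw [sq (∑ i ∈ s, a i), sum_mul_sum, mul_sum, mul_sum]
  congr 1
  · exact sum_congr rfl fun i _ => by ring
  · exact sum_congr rfl fun i _ => by rw [mul_sum]; exact sum_congr rfl fun j _ => by ring

theorem integral_norm_sum_exp_sq_le {ι : Type*} (s : Finset ι) (b : ι → ℂ) (ω : ι → ℝ)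
    {δ : ℝ} (hδ : 0 < δ) (hω : ∀ i ∈ s, ∀ j ∈ s, i ≠ j → δ ≤ |ω i - ω j|) {T : ℝ} (hT : 0 ≤ T) :
    ∫ t in T..2 * T, ‖∑ i ∈ s, b i * Complex.exp (↑(ω i * t) * I)‖ ^ 2
      ≤ T * ∑ i ∈ s, ‖b i‖ ^ 2 + 2 / δ * (∑ i ∈ s, ‖b i‖) ^ 2 := by
  classical
  set e : ι → ι → ℂ := fun i j => ∫ t in T..2 * T, Complex.exp (↑((ω i - ω j) * t) * I)
  have hint : ((∫ t in T..2 * T, ‖∑ i ∈ s, b i * Complex.exp (↑(ω i * t) * I)‖ ^ 2 : ℝ) : ℂ)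
      = ∑ i ∈ s, ∑ j ∈ s, b i * conj (b j) * e i j := by
    rw [← intervalIntegral.integral_ofReal]
    simp_rw [ofReal_norm_sum_mul_exp_sq]
    rw [intervalIntegral.integral_finsetSum fun i _ => ?_]
    · refine sum_congr rfl fun i _ => ?_
      rw [intervalIntegral.integral_finsetSum fun j _ => ?_]
      · exact sum_congr rfl fun j _ => intervalIntegral.integral_const_mul _ _
      · exact Continuous.intervalIntegrable (by fun_prop) _ _
    · exact Continuous.intervalIntegrable (by fun_prop) _ _
  have he : ∀ i ∈ s, ∀ j ∈ s, ‖e i j‖ ≤ (if i = j then T else 0) + 2 / δ := by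
    intro i hi j hj
    by_cases hij : i = j
    · subst hij
      simp only [e, sub_self, zero_mul, Complex.ofReal_zero, Complex.exp_zero,
        intervalIntegral.integral_const, ↓reduceIte, norm_smul, norm_one, mul_one, Real.norm_eq_abs]
      rw [two_mul, add_sub_cancel_right, abs_of_nonneg hT]
      linarith [div_pos two_pos hδ]
    · rw [if_neg hij, zero_add]
      have hθ := hω i hi j hj hij
      calc ‖e i j‖ ≤ 2 / |ω i - ω j| :=
            norm_intervalIntegral_exp_ofReal_mul_I_le (abs_pos.1 (hδ.trans_le hθ)) _ _
        _ ≤ 2 / δ := by gcongr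
  calc _ ≤ ‖((∫ t in T..2 * T, ‖∑ i ∈ s, b i * Complex.exp (↑(ω i * t) * I)‖ ^ 2 : ℝ) : ℂ)‖ := by
        rw [Complex.norm_real]; exact Real.le_norm_self _
    _ ≤ ∑ i ∈ s, ∑ j ∈ s, ‖b i‖ * ‖b j‖ * ((if i = j then T else 0) + 2 / δ) := by
        rw [hint]
        refine (norm_sum_le _ _).trans (sum_le_sum fun i hi => (norm_sum_le _ _).trans
          (sum_le_sum fun j hj => ?_))
        rw [norm_mul, norm_mul, Complex.norm_conj]
        gcongr
        exact he i hi j hj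
    _ = T * ∑ i ∈ s, ‖b i‖ ^ 2 + 2 / δ * (∑ i ∈ s, ‖b i‖) ^ 2 := sum_sum_mul_mul_ite_add _ _ _ _

theorem natCast_cpow_neg_ofReal_mul_I {n : ℕ} (hn : n ≠ 0) (t : ℝ) :
    (n : ℂ) ^ (-((t : ℂ) * I)) = Complex.exp (↑(-Real.log n * t) * I) := by
  rw [Complex.cpow_def_of_ne_zero (Nat.cast_ne_zero.2 hn), ← Complex.ofReal_natCast,
    ← Complex.ofReal_log (Nat.cast_nonneg n)]
  push_cast
  ring_nf

theorem inv_le_abs_log_sub_log {m n : ℕ} {M : ℝ} (hm : 1 ≤ m) (hn : 1 ≤ n) (hmM : (m : ℝ) ≤ M)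
    (hnM : (n : ℝ) ≤ M) (hmn : m ≠ n) : M⁻¹ ≤ |Real.log n - Real.log m| := by
  wlog hlt : m < n generalizing m n
  · rw [abs_sub_comm]
    exact this hn hm hnM hmM hmn.symm (lt_of_le_of_ne (not_lt.1 hlt) hmn.symm)
  have hm0 : (0 : ℝ) < m := by exact_mod_cast hm
  have hn0 : (0 : ℝ) < n := by exact_mod_cast hn
  have hgap : (1 : ℝ) ≤ n - m := by
    have : (m : ℝ) + 1 ≤ n := by exact_mod_cast hlt
    linarith
  calc M⁻¹ ≤ (n : ℝ)⁻¹ := inv_anti₀ hn0 hnM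
    _ ≤ 1 - (n / m : ℝ)⁻¹ := by
        rw [inv_div, one_sub_div hn0.ne', div_eq_mul_inv]
        exact le_mul_of_one_le_left (inv_nonneg.2 hn0.le) hgap
    _ ≤ Real.log (n / m) := Real.one_sub_inv_le_log_of_pos (div_pos hn0 hm0)
    _ ≤ |Real.log n - Real.log m| := by
        rw [Real.log_div hn0.ne' hm0.ne']
        exact le_abs_self _

theorem integral_norm_sum_mul_natCast_cpow_sq_le (s : Finset ℕ) (b : ℕ → ℂ) {M : ℝ}
    (hs : ∀ n ∈ s, 1 ≤ n ∧ (n : ℝ) ≤ M) {T : ℝ} (hT : 0 ≤ T) :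
    ∫ t in T..2 * T, ‖∑ n ∈ s, b n * (n : ℂ) ^ (-((t : ℂ) * I))‖ ^ 2
      ≤ T * ∑ n ∈ s, ‖b n‖ ^ 2 + 2 * M * (∑ n ∈ s, ‖b n‖) ^ 2 := by
  rcases s.eq_empty_or_nonempty with rfl | ⟨n₀, hn₀⟩
  · simp
  have hM : 0 < M := by
    have : (1 : ℝ) ≤ n₀ := by exact_mod_cast (hs n₀ hn₀).1
    linarith [(hs n₀ hn₀).2]
  have hsep : ∀ m ∈ s, ∀ n ∈ s, m ≠ n → M⁻¹ ≤ |-Real.log m - -Real.log n| := by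
    intro m hm n hn hmn
    rw [neg_sub_neg]
    exact inv_le_abs_log_sub_log (hs m hm).1 (hs n hn).1 (hs m hm).2 (hs n hn).2 hmn
  have hcpow : ∀ t : ℝ, ∑ n ∈ s, b n * (n : ℂ) ^ (-((t : ℂ) * I))
      = ∑ n ∈ s, b n * Complex.exp (↑(-Real.log n * t) * I) := fun t =>
    sum_congr rfl fun n hn => by
      rw [natCast_cpow_neg_ofReal_mul_I (Nat.one_le_iff_ne_zero.1 (hs n hn).1)]
  simp_rw [hcpow]
  convert integral_norm_sum_exp_sq_le s b (fun n => -Real.log n) (inv_pos.2 hM) hsep hT using 3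
  rw [div_inv_eq_mul]

theorem natCast_prod_cpow {ι : Type*} (s : Finset ι) (f : ι → ℕ) (w : ℂ) :
    ((∏ i ∈ s, f i : ℕ) : ℂ) ^ w = ∏ i ∈ s, (f i : ℂ) ^ w := by
  induction s using Finset.cons_induction with
  | empty => simp
  | cons a s ha ih => rw [prod_cons, prod_cons, Nat.cast_mul, Complex.natCast_mul_natCast_cpow, ih]

theorem sum_mul_natCast_cpow_pow (P : Finset ℕ) (c : ℕ → ℂ) (w : ℂ) (k : ℕ) :
    (∑ p ∈ P, c p * (p : ℂ) ^ w) ^ k =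
      ∑ n ∈ (piFinset fun _ : Fin k => P).image (fun f => (∏ i, f i : ℕ)),
        (∑ f ∈ piFinset (fun _ : Fin k => P) with ∏ i, f i = n, ∏ i, c (f i)) * (n : ℂ) ^ w := by
  rw [sum_pow', sum_image' (fun f => (∏ i, c (f i)) * ((∏ i, f i : ℕ) : ℂ) ^ w) fun f _ => ?_]
  · simp only [prod_mul_distrib, natCast_prod_cpow]
  · rw [sum_mul]
    exact sum_congr rfl fun g hg => by rw [(mem_filter.1 hg).2]

theorem sum_image_norm_sum_fiber_sq_le {α β E : Type*} [DecidableEq β] [SeminormedAddCommGroup E]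
    (s : Finset α) (g : α → β) (x : α → E) {K : ℕ} (hK : ∀ i ∈ s, #{j ∈ s | g j = g i} ≤ K) :
    ∑ n ∈ s.image g, ‖∑ i ∈ s with g i = n, x i‖ ^ 2 ≤ K * ∑ i ∈ s, ‖x i‖ ^ 2 := by
  rw [← sum_fiberwise_of_maps_to (fun i hi => mem_image_of_mem g hi) (fun i => ‖x i‖ ^ 2), mul_sum]
  refine sum_le_sum fun n hn => ?_
  obtain ⟨i, hi, rfl⟩ := mem_image.1 hn
  calc ‖∑ j ∈ s with g j = g i, x j‖ ^ 2 ≤ (∑ j ∈ s with g j = g i, ‖x j‖) ^ 2 := by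
        gcongr; exact norm_sum_le _ _
    _ ≤ #{j ∈ s | g j = g i} * ∑ j ∈ s with g j = g i, ‖x j‖ ^ 2 := sq_sum_le_card_mul_sum_sq
    _ ≤ K * ∑ j ∈ s with g j = g i, ‖x j‖ ^ 2 := by
        gcongr
        exact hK i hi

theorem card_filter_prod_eq_le (P : Finset ℕ) (hP : ∀ p ∈ P, p.Prime) {k : ℕ} {f : Fin k → ℕ}
    (hf : f ∈ piFinset fun _ => P) :
    #{g ∈ piFinset (fun _ : Fin k => P) | ∏ i, g i = ∏ i, f i} ≤ k ^ k := by
  have hsub : {g ∈ piFinset (fun _ : Fin k => P) | ∏ i, g i = ∏ i, f i}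
      ⊆ piFinset fun _ => univ.image f := by
    intro g hg
    obtain ⟨hgP, hgf⟩ := mem_filter.1 hg
    refine mem_piFinset.2 fun i => mem_image.2 ?_
    have hgi : (g i).Prime := hP _ (mem_piFinset.1 hgP i)
    obtain ⟨j, -, hj⟩ := hgi.prime.exists_mem_finset_dvd (hgf ▸ dvd_prod_of_mem g (mem_univ i))
    exact ⟨j, mem_univ j,
      ((Nat.prime_dvd_prime_iff_eq hgi (hP _ (mem_piFinset.1 hf j))).1 hj).symm⟩
  calc _ ≤ #(piFinset fun _ : Fin k => univ.image f) := card_le_card hsub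
    _ = #(univ.image f) ^ k := by simp
    _ ≤ k ^ k := by
        gcongr
        simpa using card_image_le (s := univ) (f := f)

theorem integral_norm_sum_prime_mul_cpow_pow_le (P : Finset ℕ) (hP : ∀ p ∈ P, p.Prime) {z : ℝ}
    (hz : 0 ≤ z) (hPz : ∀ p ∈ P, (p : ℝ) ≤ z) (c : ℕ → ℂ) (k : ℕ) {T : ℝ} (hT : 0 ≤ T) :
    ∫ t in T..2 * T, ‖∑ p ∈ P, c p * (p : ℂ) ^ (-((t : ℂ) * I))‖ ^ (2 * k)
      ≤ T * k ^ k * (∑ p ∈ P, ‖c p‖ ^ 2) ^ k + 2 * z ^ k * (∑ p ∈ P, ‖c p‖) ^ (2 * k) := by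
  set PF := piFinset fun _ : Fin k => P
  set N : (Fin k → ℕ) → ℕ := fun f => ∏ i, f i
  have hN : ∀ n ∈ PF.image N, 1 ≤ n ∧ (n : ℝ) ≤ z ^ k := by
    intro n hn
    obtain ⟨f, hf, rfl⟩ := mem_image.1 hn
    have hfP : ∀ i, f i ∈ P := mem_piFinset.1 hf
    refine ⟨one_le_prod' fun i _ => (hP _ (hfP i)).one_lt.le, ?_⟩
    calc ((∏ i, f i : ℕ) : ℝ) = ∏ i, (f i : ℝ) := Nat.cast_prod _ _
      _ ≤ ∏ _i : Fin k, z := prod_le_prod (fun _ _ => Nat.cast_nonneg _) fun i _ => hPz _ (hfP i)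
      _ = z ^ k := by simp
  have hfiber : ∀ f ∈ PF, #{g ∈ PF | N g = N f} ≤ k ^ k := fun f hf =>
    card_filter_prod_eq_le P hP hf
  have hpow : ∀ t : ℝ, ‖∑ p ∈ P, c p * (p : ℂ) ^ (-((t : ℂ) * I))‖ ^ (2 * k) = ‖∑ n ∈ PF.image N,
      (∑ f ∈ PF with N f = n, ∏ i, c (f i)) * (n : ℂ) ^ (-((t : ℂ) * I))‖ ^ 2 := fun t => by
    rw [pow_mul', ← norm_pow, sum_mul_natCast_cpow_pow]
  calc _ = ∫ t in T..2 * T, ‖∑ n ∈ PF.image N,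
          (∑ f ∈ PF with N f = n, ∏ i, c (f i)) * (n : ℂ) ^ (-((t : ℂ) * I))‖ ^ 2 := by
        simp only [hpow]
    _ ≤ T * ∑ n ∈ PF.image N, ‖∑ f ∈ PF with N f = n, ∏ i, c (f i)‖ ^ 2
          + 2 * z ^ k * (∑ n ∈ PF.image N, ‖∑ f ∈ PF with N f = n, ∏ i, c (f i)‖) ^ 2 :=
        integral_norm_sum_mul_natCast_cpow_sq_le _ _ hN hT
    _ ≤ T * (k ^ k * ∑ f ∈ PF, ‖∏ i, c (f i)‖ ^ 2) + 2 * z ^ k * (∑ f ∈ PF, ‖∏ i, c (f i)‖) ^ 2 := by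
        gcongr
        · exact_mod_cast sum_image_norm_sum_fiber_sq_le PF N _ hfiber
        · exact (sum_le_sum fun n _ => norm_sum_le _ _).trans_eq
            (sum_fiberwise_of_maps_to (fun f hf => mem_image_of_mem N hf) _)
    _ = _ := by
        simp only [norm_prod, ← prod_pow, PF]
        rw [← sum_pow' P (fun p => ‖c p‖ ^ 2), ← sum_pow' P (fun p => ‖c p‖), pow_mul']
        ring

theorem integral_norm_sum_prime_cpow_pow_le (P : Finset ℕ) (hP : ∀ p ∈ P, p.Prime) {z : ℝ}
    (hz : 0 ≤ z) (hPz : ∀ p ∈ P, (p : ℝ) ≤ z) (σ : ℝ) (k : ℕ) {T : ℝ} (hT : 0 ≤ T) :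
    ∫ t in T..2 * T, ‖∑ p ∈ P, (p : ℂ) ^ (-((σ : ℂ) + t * I))‖ ^ (2 * k)
      ≤ (T * k ^ k + 2 * z ^ (2 * k)) * (∑ p ∈ P, (p : ℝ) ^ (-(2 * σ))) ^ k := by
  have hsplit : ∀ t : ℝ, ∑ p ∈ P, (p : ℂ) ^ (-((σ : ℂ) + t * I))
      = ∑ p ∈ P, (((p : ℝ) ^ (-σ) : ℝ) : ℂ) * (p : ℂ) ^ (-((t : ℂ) * I)) := fun t =>
    sum_congr rfl fun p hp => by
      rw [neg_add, Complex.cpow_add _ _ (Nat.cast_ne_zero.2 (hP p hp).ne_zero),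
        Complex.ofReal_cpow (Nat.cast_nonneg p), Complex.ofReal_natCast, Complex.ofReal_neg]
  have hnorm : ∀ p : ℕ, ‖(((p : ℝ) ^ (-σ) : ℝ) : ℂ)‖ = (p : ℝ) ^ (-σ) := fun p => by
    rw [Complex.norm_real, Real.norm_of_nonneg (by positivity)]
  have hsq : ∀ p : ℕ, ((p : ℝ) ^ (-σ)) ^ 2 = (p : ℝ) ^ (-(2 * σ)) := fun p => by
    rw [← Real.rpow_natCast, ← Real.rpow_mul (Nat.cast_nonneg p)]
    ring_nf
  have hcard : (#P : ℝ) ≤ z := by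
    have hsub : P ⊆ Icc 1 ⌊z⌋₊ := fun p hp => mem_Icc.2
      ⟨(hP p hp).one_lt.le, Nat.le_floor (hPz p hp)⟩
    calc (#P : ℝ) ≤ ⌊z⌋₊ := by simpa using card_le_card hsub
      _ ≤ z := Nat.floor_le hz
  have hCS : (∑ p ∈ P, (p : ℝ) ^ (-σ)) ^ 2 ≤ z * ∑ p ∈ P, (p : ℝ) ^ (-(2 * σ)) := by
    calc _ ≤ #P * ∑ p ∈ P, ((p : ℝ) ^ (-σ)) ^ 2 := sq_sum_le_card_mul_sum_sq
      _ ≤ z * ∑ p ∈ P, (p : ℝ) ^ (-(2 * σ)) := by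
        simp only [hsq]
        gcongr
  simp only [hsplit]
  refine (integral_norm_sum_prime_mul_cpow_pow_le P hP hz hPz _ k hT).trans ?_
  simp only [hnorm, hsq]
  rw [add_mul, mul_assoc (2 : ℝ), mul_assoc (2 : ℝ)]
  gcongr _ + 2 * ?_
  calc z ^ k * (∑ p ∈ P, (p : ℝ) ^ (-σ)) ^ (2 * k)
      = z ^ k * ((∑ p ∈ P, (p : ℝ) ^ (-σ)) ^ 2) ^ k := by rw [pow_mul]
    _ ≤ z ^ k * (z * ∑ p ∈ P, (p : ℝ) ^ (-(2 * σ))) ^ k := by gcongr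
    _ = z ^ (2 * k) * (∑ p ∈ P, (p : ℝ) ^ (-(2 * σ))) ^ k := by ring

theorem pow_le_of_le_log_div {z T : ℝ} {m k : ℕ} (hz : 1 < z) (hT : 0 < T) (hm : 0 < m)
    (h : (k : ℝ) ≤ Real.log T / (m * Real.log z)) : z ^ (m * k) ≤ T := by
  have hlogz : 0 < Real.log z := Real.log_pos hz
  rw [← Real.log_le_log_iff (by positivity) hT, Real.log_pow]
  have := (le_div_iff₀ (by positivity)).1 h
  push_cast
  linarith

theorem stmt10_general (σ : ℝ) :
    ∃ C > (0:ℝ), ∀ y z T : ℝ, ∀ k : ℕ,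
      2 ≤ y → y ≤ z → 2 ≤ T → 1 ≤ k → (k:ℝ) ≤ Real.log T / (3 * Real.log z) →
      (1/T) * (∫ t in T..(2*T),
          (‖(∑ p ∈ Finset.filter Nat.Prime (Finset.Icc ⌈y⌉₊ ⌊z⌋₊),
              (p:ℂ) ^ (-((σ:ℂ) + (t:ℂ) * Complex.I)))‖) ^ (2*k))
        ≤ C * (((k:ℝ) * ∑ p ∈ Finset.filter Nat.Prime (Finset.Icc ⌈y⌉₊ ⌊z⌋₊),
              (p:ℝ) ^ (-(2*σ))) ^ k + T ^ (-(1/3) : ℝ)) := by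
  refine ⟨3, by norm_num, fun y z T k hy hyz hT _ hk => ?_⟩
  set P := filter Nat.Prime (Icc ⌈y⌉₊ ⌊z⌋₊)
  set Q := ∑ p ∈ P, (p : ℝ) ^ (-(2 * σ))
  have hz : 2 ≤ z := hy.trans hyz
  have hPz : ∀ p ∈ P, (p : ℝ) ≤ z := fun p hp =>
    (Nat.cast_le.2 (mem_Icc.1 (mem_filter.1 hp).1).2).trans (Nat.floor_le (by linarith))
  have hzT : z ^ (2 * k) ≤ T := (pow_le_pow_right₀ (by linarith) (by omega)).trans
    (pow_le_of_le_log_div (by linarith) (by linarith) three_pos hk)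
  have hkk : (1 : ℝ) ≤ (k : ℝ) ^ k := by exact_mod_cast Nat.pow_self_pos
  have hQ : 0 ≤ Q := sum_nonneg fun p _ => by positivity
  have hmv := integral_norm_sum_prime_cpow_pow_le P (fun p hp => (mem_filter.1 hp).2)
    (by linarith) hPz σ k (by linarith : (0 : ℝ) ≤ T)
  calc _ ≤ 1 / T * ((T * k ^ k + 2 * T) * Q ^ k) := by
        gcongr
        exact hmv.trans (by gcongr)
    _ = (k ^ k + 2) * Q ^ k := by field_simp
    _ ≤ 3 * (k * Q) ^ k := by
        rw [mul_pow]
        nlinarith [pow_nonneg hQ k]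
    _ ≤ _ := by
        gcongr
        exact le_add_of_nonneg_right (by positivity)

theorem stmt10 (σ : ℝ) (hσ : 1/2 < σ) (hσ1 : σ < 1) :
    ∃ C > (0:ℝ), ∀ y z T : ℝ, ∀ k : ℕ,
      2 ≤ y → y ≤ z → 2 ≤ T → 1 ≤ k → (k:ℝ) ≤ Real.log T / (3 * Real.log z) →
      (1/T) * (∫ t in T..(2*T),
          (‖(∑ p ∈ Finset.filter Nat.Prime (Finset.Icc ⌈y⌉₊ ⌊z⌋₊),
              (p:ℂ) ^ (-((σ:ℂ) + (t:ℂ) * Complex.I)))‖) ^ (2*k))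
        ≤ C * (((k:ℝ) * ∑ p ∈ Finset.filter Nat.Prime (Finset.Icc ⌈y⌉₊ ⌊z⌋₊),
              (p:ℝ) ^ (-(2*σ))) ^ k + T ^ (-(1/3) : ℝ)) :=
  stmt10_general σ
end

section
/- For every real σ with 1/2 < σ < 1 and every real z ≥ 3, one has Σ 1/(ν·p^{νσ}) ≪ (log log z)/z^{σ−1/2}, where the sum is over all pairs (p, ν) with p prime, ν ≥ 1 an integer, p ≤ z and p^{ν} > z, and the implied constant is absolute. -/
/-!
Since `p ≤ z`, only exponents `ν ≥ 2` occur, and `p ^ ν > z` gives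
`p ^ (νσ) ≥ z ^ (σ - 1/2) p ^ (ν/2)`; hence the inner sum is at most
`z ^ (1/2 - σ) ∑_{ν ≥ 2} p ^ (-ν/2) ≤ 4 z ^ (1/2 - σ) / p`. It remains to show
`∑_{p ≤ z} 1/p ≪ log log z`. By Rankin's trick `1/p ≤ e p ^ (-s)` for `p ≤ z` and
`s = 1 + 1/log z`, and the Euler product gives
`∑_p p ^ (-s) ≤ log ζ(s) ≤ log (1 + 1/(s - 1)) = log (1 + log z)`.
-/

open Real

lemma tsum_subtype_le_geometric {P : ℕ → Prop} {f : ℕ → ℝ} {c r : ℝ} {k : ℕ}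
    (hc : 0 ≤ c) (hr₀ : 0 ≤ r) (hr₁ : r < 1) (hk : ∀ ν, P ν → k ≤ ν)
    (hf₀ : ∀ ν, P ν → 0 ≤ f ν) (hf : ∀ ν, P ν → f ν ≤ c * r ^ ν) :
    ∑' ν : {ν // P ν}, f ν ≤ c * r ^ k / (1 - r) := by
  set g : ℕ → ℝ := fun i => c * r ^ k * r ^ i
  have hg : Summable g := (summable_geometric_of_lt_one hr₀ hr₁).mul_left _
  set e : {ν // P ν} → ℕ := fun ν => ν - k
  have he : Function.Injective e := fun a b hab => by
    have := hk a a.2; have := hk b b.2; exact Subtype.ext (by simp only [e] at hab; omega)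
  have hfg : ∀ ν : {ν // P ν}, f ν ≤ g (e ν) := fun ν => by
    have hν : (ν : ℕ) = k + e ν := by have := hk ν ν.2; simp only [e]; omega
    calc f ν ≤ c * r ^ (ν : ℕ) := hf ν ν.2
      _ = g (e ν) := by rw [hν, pow_add, ← mul_assoc]
  have hsum : Summable fun ν : {ν // P ν} => f ν :=
    (hg.comp_injective he).of_nonneg_of_le (fun ν => hf₀ ν ν.2) hfg
  calc ∑' ν : {ν // P ν}, f ν ≤ ∑' i, g i :=
        hsum.tsum_le_tsum_of_inj e he (fun i _ => by positivity) hfg hg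
    _ = c * r ^ k / (1 - r) := by
        rw [tsum_mul_left, tsum_geometric_of_lt_one hr₀ hr₁, div_eq_mul_inv]

lemma one_div_nat_mul_rpow_le_of_le_pow {σ z p : ℝ} {ν : ℕ} (hσ : 1 / 2 ≤ σ) (hz : 0 < z) (hp : 0 < p)
    (hν : 1 ≤ ν) (hzp : z ≤ p ^ ν) :
    1 / (ν * p ^ (ν * σ)) ≤ z ^ (1 / 2 - σ) * (p ^ (-(1 / 2) : ℝ)) ^ ν := by
  have hpν : 0 < p ^ ν := pow_pos hp ν
  have hsplit : p ^ ((ν : ℝ) * σ) = (p ^ ν) ^ (σ - 1 / 2) * (p ^ ν) ^ (1 / 2 : ℝ) := by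
    rw [← rpow_add hpν, sub_add_cancel, rpow_natCast_mul hp.le]
  have hlow : z ^ (σ - 1 / 2) * (p ^ ν) ^ (1 / 2 : ℝ) ≤ ν * p ^ ((ν : ℝ) * σ) := by
    rw [hsplit]
    calc z ^ (σ - 1 / 2) * (p ^ ν) ^ (1 / 2 : ℝ)
        ≤ (p ^ ν) ^ (σ - 1 / 2) * (p ^ ν) ^ (1 / 2 : ℝ) := by
          gcongr
      _ ≤ ν * ((p ^ ν) ^ (σ - 1 / 2) * (p ^ ν) ^ (1 / 2 : ℝ)) :=
          le_mul_of_one_le_left (by positivity) (by exact_mod_cast hν)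
  calc 1 / (ν * p ^ ((ν : ℝ) * σ)) ≤ 1 / (z ^ (σ - 1 / 2) * (p ^ ν) ^ (1 / 2 : ℝ)) :=
        one_div_le_one_div_of_le (by positivity) hlow
    _ = z ^ (1 / 2 - σ) * (p ^ (-(1 / 2) : ℝ)) ^ ν := by
        rw [one_div, mul_inv, ← rpow_neg hz.le, neg_sub, ← rpow_neg hpν.le,
          ← rpow_natCast_mul hp.le, ← rpow_mul_natCast hp.le, mul_comm (ν : ℝ)]

lemma tsum_prime_power_tail_le {σ z p : ℝ} (hσ : 1 / 2 ≤ σ) (hp : 2 ≤ p) (hpz : p ≤ z) :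
    ∑' ν : {ν : ℕ // 1 ≤ ν ∧ z < p ^ ν}, 1 / ((ν : ℕ) * p ^ (((ν : ℕ) : ℝ) * σ))
      ≤ 4 * z ^ (1 / 2 - σ) * p⁻¹ := by
  have hz : 0 < z := by linarith
  have hc : 0 ≤ z ^ (1 / 2 - σ) := rpow_nonneg hz.le _
  set r : ℝ := p ^ (-(1 / 2) : ℝ)
  have hr₀ : 0 ≤ r := rpow_nonneg (by linarith) _
  have hr_sq : r ^ 2 = p⁻¹ := by
    rw [← rpow_mul_natCast (by linarith)]; norm_num [rpow_neg_one]
  have hr : r ≤ 3 / 4 := by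
    have : p⁻¹ ≤ 2⁻¹ := inv_anti₀ (by norm_num) hp
    nlinarith
  have htwo : ∀ ν : ℕ, 1 ≤ ν ∧ z < p ^ ν → 2 ≤ ν := fun ν ⟨hν, hzν⟩ => by
    by_contra! h
    obtain rfl : ν = 1 := by omega
    linarith [pow_one p]
  calc _ ≤ z ^ (1 / 2 - σ) * r ^ 2 / (1 - r) :=
        tsum_subtype_le_geometric hc hr₀ (by linarith) htwo
          (fun ν _ => by positivity)
          (fun ν hν => one_div_nat_mul_rpow_le_of_le_pow hσ hz (by linarith) hν.1 hν.2.le)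
    _ ≤ z ^ (1 / 2 - σ) * r ^ 2 / (1 / 4) := by gcongr; linarith
    _ = 4 * z ^ (1 / 2 - σ) * p⁻¹ := by rw [hr_sq]; ring

noncomputable def natRpowNegHom (s : ℝ) : ℕ →* ℝ where
  toFun n := (n : ℝ) ^ (-s)
  map_one' := by simp
  map_mul' m n := by push_cast; exact mul_rpow (Nat.cast_nonneg m) (Nat.cast_nonneg n)

lemma tsum_one_div_nat_add_one_rpow_le {s : ℝ} (hs : 1 < s) :
    ∑' n : ℕ, 1 / ((n : ℝ) + 1) ^ s ≤ 1 + 1 / (s - 1) := by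
  have h := ZetaAsymptotics.zeta_limit_aux1 hs
  have : 0 ≤ ZetaAsymptotics.termTSum s :=
    tsum_nonneg fun n => ZetaAsymptotics.term_nonneg _ _
  nlinarith

lemma tsum_natRpowNegHom_le {s : ℝ} (hs : 1 < s) :
    ∑' n, natRpowNegHom s n ≤ 1 + 1 / (s - 1) := by
  have hsum : Summable (natRpowNegHom s) := summable_nat_rpow.mpr (by linarith)
  have h₀ : natRpowNegHom s 0 = 0 := by
    simp [natRpowNegHom, zero_rpow (by linarith : -s ≠ 0)]
  rw [hsum.tsum_eq_zero_add, h₀, zero_add]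
  simpa [natRpowNegHom, rpow_neg] using tsum_one_div_nat_add_one_rpow_le hs

lemma sum_primesBelow_le_log_tsum (f : ℕ →* ℝ) (hf₀ : ∀ n, 0 ≤ f n)
    (hf₁ : ∀ p, p.Prime → f p < 1) (hf : Summable f) (N : ℕ) :
    ∑ p ∈ N.primesBelow, f p ≤ log (∑' n, f n) := by
  have hpos : ∀ p ∈ N.primesBelow, 0 < 1 - f p := fun p hp =>
    sub_pos.mpr (hf₁ p (Nat.prime_of_mem_primesBelow hp))
  have hterm : ∀ p ∈ N.primesBelow, f p ≤ log (1 - f p)⁻¹ := fun p hp => by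
    rw [log_inv]; linarith [log_le_sub_one_of_pos (hpos p hp)]
  have heuler := EulerProduct.prod_primesBelow_geometric_eq_tsum_smoothNumbers hf N
  have hprod : 0 < ∏ p ∈ N.primesBelow, (1 - f p)⁻¹ :=
    Finset.prod_pos fun p hp => inv_pos.mpr (hpos p hp)
  calc ∑ p ∈ N.primesBelow, f p ≤ ∑ p ∈ N.primesBelow, log (1 - f p)⁻¹ :=
        Finset.sum_le_sum hterm
    _ = log (∏ p ∈ N.primesBelow, (1 - f p)⁻¹) :=
        (log_prod fun p hp => inv_ne_zero (hpos p hp).ne').symm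
    _ ≤ log (∑' n, f n) := by
        rw [heuler] at hprod ⊢
        exact log_le_log hprod (hf.tsum_subtype_le f _ hf₀)

lemma sum_primesBelow_rpow_neg_le {s : ℝ} (hs : 1 < s) (N : ℕ) :
    ∑ p ∈ N.primesBelow, (p : ℝ) ^ (-s) ≤ log (1 + 1 / (s - 1)) := by
  have hsum : Summable (natRpowNegHom s) := summable_nat_rpow.mpr (by linarith)
  have hlt : ∀ p, p.Prime → natRpowNegHom s p < 1 := fun p hp =>
    rpow_lt_one_of_one_lt_of_neg (by exact_mod_cast hp.one_lt) (by linarith)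
  calc ∑ p ∈ N.primesBelow, (p : ℝ) ^ (-s) ≤ log (∑' n, natRpowNegHom s n) :=
        sum_primesBelow_le_log_tsum _ (fun n => rpow_nonneg n.cast_nonneg _) hlt hsum N
    _ ≤ log (1 + 1 / (s - 1)) :=
        log_le_log (hsum.tsum_pos (fun n => rpow_nonneg n.cast_nonneg _) 1 (by simp))
          (tsum_natRpowNegHom_le hs)

lemma inv_le_exp_one_mul_rpow_neg {p z : ℝ} (hp : 0 < p) (hpz : p ≤ z) (hz : 1 ≤ z) :
    p⁻¹ ≤ exp 1 * p ^ (-(1 + (log z)⁻¹)) := by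
  have ht : 0 ≤ (log z)⁻¹ := inv_nonneg.mpr (log_nonneg hz)
  have hpt : p ^ (log z)⁻¹ ≤ exp 1 :=
    (rpow_le_rpow hp.le hpz ht).trans rpow_inv_log_le_exp_one
  rw [rpow_neg hp.le, rpow_add hp, rpow_one, mul_inv, ← mul_assoc, mul_comm _ p⁻¹, mul_assoc]
  calc p⁻¹ = p⁻¹ * (p ^ (log z)⁻¹ * (p ^ (log z)⁻¹)⁻¹) := by
        rw [mul_inv_cancel₀ (rpow_pos_of_pos hp _).ne', mul_one]
    _ ≤ p⁻¹ * (exp 1 * (p ^ (log z)⁻¹)⁻¹) := by gcongr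

lemma log_one_add_log_le {z : ℝ} (hz : 3 ≤ z) : log (1 + log z) ≤ 13 * log (log z) := by
  have hL : 1.098 ≤ log z := by
    linarith [log_three_gt_d9, log_le_log (by norm_num : (0 : ℝ) < 3) hz]
  have hLL : 1 / 12 ≤ log (log z) := by
    have := one_sub_inv_le_log_of_pos (by linarith : 0 < log z)
    have : (log z)⁻¹ ≤ 1.098⁻¹ := inv_anti₀ (by norm_num) hL
    norm_num at *; linarith
  have hlog2 : log 2 ≤ 1 := by linarith [log_le_sub_one_of_pos (two_pos : (0 : ℝ) < 2)]
  calc log (1 + log z) ≤ log (2 * log z) := log_le_log (by linarith) (by linarith)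
    _ = log 2 + log (log z) := log_mul two_ne_zero (by linarith)
    _ ≤ 13 * log (log z) := by linarith

lemma sum_inv_primes_le {z : ℝ} (hz : 3 ≤ z) :
    ∑ p ∈ Finset.filter Nat.Prime (Finset.Iic ⌊z⌋₊), (p : ℝ)⁻¹ ≤ 39 * log (log z) := by
  have hlog : 0 < log z := log_pos (by linarith)
  have hs : 1 < 1 + (log z)⁻¹ := by simp [hlog]
  have hprimes : Finset.filter Nat.Prime (Finset.Iic ⌊z⌋₊) = (⌊z⌋₊ + 1).primesBelow := by
    ext p; simp [Nat.mem_primesBelow]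
  rw [hprimes]
  calc ∑ p ∈ (⌊z⌋₊ + 1).primesBelow, (p : ℝ)⁻¹
      ≤ ∑ p ∈ (⌊z⌋₊ + 1).primesBelow, exp 1 * (p : ℝ) ^ (-(1 + (log z)⁻¹)) := by
        refine Finset.sum_le_sum fun p hp => inv_le_exp_one_mul_rpow_neg ?_ ?_ (by linarith)
        · exact_mod_cast (Nat.prime_of_mem_primesBelow hp).pos
        · exact (Nat.le_floor_iff (by linarith)).mp
            (Nat.lt_succ_iff.mp (Nat.lt_of_mem_primesBelow hp))
    _ ≤ 3 * log (1 + log z) := by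
        rw [← Finset.mul_sum]
        have := sum_primesBelow_rpow_neg_le hs (⌊z⌋₊ + 1)
        simp only [add_sub_cancel_left, one_div, inv_inv] at this
        exact mul_le_mul exp_one_lt_three.le this
          (Finset.sum_nonneg fun p _ => rpow_nonneg p.cast_nonneg _) (by norm_num)
    _ ≤ 39 * log (log z) := by linarith [log_one_add_log_le hz]

theorem stmt12 :
    ∃ C > (0:ℝ), ∀ σ z : ℝ, 1/2 < σ → σ < 1 → 3 ≤ z →
      (∑ p ∈ Finset.filter Nat.Prime (Finset.Iic ⌊z⌋₊),
          ∑' ν : {ν : ℕ // 1 ≤ ν ∧ z < (p:ℝ) ^ (ν:ℕ)},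
            1 / (((ν:ℕ):ℝ) * (p:ℝ) ^ (((ν:ℕ):ℝ) * σ)))
        ≤ C * Real.log (Real.log z) / z ^ (σ - 1/2) := by
  refine ⟨156, by norm_num, fun σ z hσ _ hz => ?_⟩
  have hz₀ : 0 ≤ z := by linarith
  calc _ ≤ ∑ p ∈ Finset.filter Nat.Prime (Finset.Iic ⌊z⌋₊),
          4 * z ^ (1 / 2 - σ) * (p : ℝ)⁻¹ := by
        refine Finset.sum_le_sum fun p hp => tsum_prime_power_tail_le hσ.le ?_ ?_
        · exact_mod_cast (Finset.mem_filter.mp hp).2.two_le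
        · exact (Nat.le_floor_iff hz₀).mp (Finset.mem_Iic.mp (Finset.mem_filter.mp hp).1)
    _ = 4 * z ^ (1 / 2 - σ) * ∑ p ∈ Finset.filter Nat.Prime (Finset.Iic ⌊z⌋₊), (p : ℝ)⁻¹ :=
        (Finset.mul_sum ..).symm
    _ ≤ 4 * z ^ (1 / 2 - σ) * (39 * log (log z)) := by
        gcongr
        exact sum_inv_primes_le hz
    _ = 156 * log (log z) / z ^ (σ - 1 / 2) := by
        rw [← neg_sub, rpow_neg hz₀]; ring
end

section
/- Let σ ∈ (1/2, 1) be fixed, let N ≥ 0 be an integer, and let a_0 > 0, a_1, …, a_{N+1} be real numbers. Suppose the positive reals τ = τ(k) and k are related by τ = (k^{1/σ−1}/(σ log k))·Σ_{n=0}^{N+1} a_n/(log k)^n as k → ∞. Then there exists a sequence of polynomials b_0, b_1, …, b_N with real coefficients, deg(b_n) ≤ n and b_0 the constant σ/(1−σ), such that log k = (log τ)·{ Σ_{n=0}^{N} b_n(log_2 τ)/(log τ)^n + O( (log_2 τ/log τ)^{N+1} ) }, where the implied constant depends only on σ, N and the a_n. -/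
open Real

/-!
Write `L = log k`, `T = log τ` and `u = L / T`. Taking logarithms, the hypothesis reads
`T = α L - log σ - log L + log P(1/L)` with `α = 1/σ - 1` and `P(x) = ∑ aₙ xⁿ`, i.e.
`α u = 1 + log T / T + T⁻¹ (log σ + log u - log P(1/(u T)))`.
An expansion `∑ₙ bₙ(log T) / Tⁿ` with `deg bₙ ≤ n` is an element of `ℝ[X][X]` (inner variable
`log T`, outer variable `1/T`) whose `n`-th coefficient has degree `≤ n`; every term is then
`O((log T / T)ⁿ)`. Functions admitting such an expansion up to `O((log T / T)^(j+1))` are closed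
under ring operations and under composition with smooth functions (by Taylor's theorem), and
multiplying by `1/T` gains one order. Since `u → 1/α`, feeding the order-`j` expansion of `u` into
the right-hand side gives its order-`(j+1)` expansion.
-/

namespace LogExpansion

open Filter Polynomial Topology Asymptotics Finset

def coeffDegLE : Subalgebra ℝ ℝ[X][X] where
  carrier := {V | ∀ n, (V.coeff n).natDegree ≤ n}
  mul_mem' {V W} hV hW n := by
    rw [coeff_mul]
    refine natDegree_sum_le_of_forall_le _ _ fun ij hij => ?_
    rw [HasAntidiagonal.mem_antidiagonal] at hij
    exact natDegree_mul_le.trans (hij ▸ add_le_add (hV ij.1) (hW ij.2))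
  add_mem' {V W} hV hW n := by
    rw [coeff_add]
    exact (natDegree_add_le _ _).trans (max_le (hV n) (hW n))
  algebraMap_mem' c n := by
    rw [Polynomial.algebraMap_apply, coeff_C]
    split_ifs <;> simp

theorem mem_coeffDegLE {V : ℝ[X][X]} : V ∈ coeffDegLE ↔ ∀ n, (V.coeff n).natDegree ≤ n :=
  Iff.rfl

theorem X_mem_coeffDegLE : (X : ℝ[X][X]) ∈ coeffDegLE := fun n => by
  rw [coeff_X]
  split_ifs <;> simp

theorem C_X_mul_X_mem_coeffDegLE : C X * X ∈ coeffDegLE := fun n => by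
  rw [coeff_C_mul_X]
  split_ifs with h <;> simp [h]

noncomputable def evalLogInv (t : ℝ) : ℝ[X][X] →ₐ[ℝ] ℝ :=
  aevalTower (aeval (log t)) t⁻¹

@[simp]
theorem evalLogInv_C (t : ℝ) (p : ℝ[X]) : evalLogInv t (C p) = p.eval (log t) := by
  simp [evalLogInv]

@[simp]
theorem evalLogInv_X (t : ℝ) : evalLogInv t X = t⁻¹ := by
  simp [evalLogInv]

theorem evalLogInv_eq_sum {t : ℝ} {V : ℝ[X][X]} {D : ℕ} (hD : V.natDegree < D) :
    evalLogInv t V = ∑ n ∈ range D, (V.coeff n).eval (log t) / t ^ n := by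
  change eval₂ ((aeval (log t) : ℝ[X] →ₐ[ℝ] ℝ) : ℝ[X] →+* ℝ) t⁻¹ V = _
  simp [eval₂_eq_sum_range' _ hD, div_eq_mul_inv]

section Asymptotics

variable {ι : Type*} {l : Filter ι} {T : ι → ℝ}

theorem tendsto_log_div_self (hT : Tendsto T l atTop) :
    Tendsto (fun k => log (T k) / T k) l (𝓝 0) :=
  isLittleO_log_id_atTop.tendsto_div_nhds_zero.comp hT

theorem isBigO_inv_log_div_self (hT : Tendsto T l atTop) :
    (fun k => (T k)⁻¹) =O[l] fun k => log (T k) / T k := by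
  refine IsBigO.of_bound 1 ?_
  filter_upwards [(tendsto_log_atTop.comp hT).eventually_ge_atTop 1, hT.eventually_gt_atTop 0]
    with k hM hT0
  simp only [Function.comp_apply] at hM
  rw [one_mul, norm_inv, norm_div, div_eq_inv_mul (‖log (T k)‖)]
  exact le_mul_of_one_le_right (by positivity) (hM.trans (le_abs_self _))

theorem isBigO_pow_of_le {f : ι → ℝ} (hf : Tendsto f l (𝓝 0)) {i j : ℕ} (hij : i ≤ j) :
    (fun k => f k ^ j) =O[l] fun k => f k ^ i := by
  have hsmall : (fun k => f k ^ (j - i)) =O[l] fun _ => (1 : ℝ) := (hf.pow _).isBigO_one ℝ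
  refine ((isBigO_refl (fun k => f k ^ i) l).mul hsmall).congr (fun k => ?_) fun k => mul_one _
  rw [← pow_add, Nat.add_sub_cancel' hij]

theorem isBigO_eval_div_pow (hT : Tendsto T l atTop) {p : ℝ[X]} {n : ℕ} (hp : p.natDegree ≤ n) :
    (fun k => p.eval (log (T k)) / T k ^ n) =O[l] fun k => (log (T k) / T k) ^ n := by
  have hdeg : p.degree ≤ (X ^ n : ℝ[X]).degree := by
    rw [degree_X_pow]; exact degree_le_of_natDegree_le hp
  have hp := ((isBigO_atTop_of_degree_le p _ hdeg).comp_tendsto (tendsto_log_atTop.comp hT)).mul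
    (isBigO_refl (fun k => (T k ^ n)⁻¹) l)
  refine hp.congr (fun k => ?_) fun k => ?_ <;> simp [div_eq_mul_inv, mul_pow]

theorem isBigO_evalLogInv_sub_sum (hT : Tendsto T l atTop) {V : ℝ[X][X]} (hV : V ∈ coeffDegLE)
    (j : ℕ) :
    (fun k => evalLogInv (T k) V - ∑ n ∈ range j, (V.coeff n).eval (log (T k)) / T k ^ n) =O[l]
      fun k => (log (T k) / T k) ^ j := by
  set D := max (V.natDegree + 1) j
  have htail : ∀ k, evalLogInv (T k) V - ∑ n ∈ range j, (V.coeff n).eval (log (T k)) / T k ^ n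
      = ∑ n ∈ Ico j D, (V.coeff n).eval (log (T k)) / T k ^ n := fun k => by
    rw [evalLogInv_eq_sum (Nat.lt_of_succ_le (le_max_left _ _)),
      sum_Ico_eq_sub _ (le_max_right _ _)]
  simp_rw [htail]
  refine IsBigO.fun_sum fun n hn => ?_
  exact (isBigO_eval_div_pow hT (hV n)).trans
    (isBigO_pow_of_le (tendsto_log_div_self hT) (mem_Ico.1 hn).1)

theorem isBigO_evalLogInv_one (hT : Tendsto T l atTop) {V : ℝ[X][X]} (hV : V ∈ coeffDegLE) :
    (fun k => evalLogInv (T k) V) =O[l] fun _ => (1 : ℝ) := by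
  simpa using isBigO_evalLogInv_sub_sum hT hV 0

end Asymptotics

theorem exists_isBigO_sub_eval_of_contDiffOn {F : ℝ → ℝ} {s : Set ℝ} (hs : IsOpen s)
    (hsc : Convex ℝ s) {c : ℝ} (hc : c ∈ s) {n : ℕ} (hF : ContDiffOn ℝ n F s) :
    ∃ p : ℝ[X], (fun y => F y - p.eval y) =O[𝓝 c] fun y => (y - c) ^ n := by
  refine ⟨∑ k ∈ range (n + 1), C (taylorCoeffWithin F k s c) * (X - C c) ^ k, ?_⟩
  have h := (taylor_isLittleO hsc hc hF).isBigO
  rw [hs.nhdsWithin_eq hc] at h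
  refine h.congr (fun y => ?_) fun _ => rfl
  simp [taylor_within_apply, eval_finsetSum, taylorCoeffWithin, mul_comm, mul_left_comm]

section Expansion

variable {ι : Type*} {l : Filter ι} {T f g : ι → ℝ} {V W : ℝ[X][X]} {j : ℕ}

structure HasExpansion (l : Filter ι) (T f : ι → ℝ) (V : ℝ[X][X]) (j : ℕ) : Prop where
  mem : V ∈ coeffDegLE
  isBigO : (fun k => f k - evalLogInv (T k) V) =O[l] fun k => (log (T k) / T k) ^ (j + 1)

theorem HasExpansion.of_eventuallyEq (hV : V ∈ coeffDegLE)
    (h : f =ᶠ[l] fun k => evalLogInv (T k) V) : HasExpansion l T f V j :=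
  ⟨hV, (isBigO_zero _ _).congr' (h.mono fun k hk => by simp [hk]) EventuallyEq.rfl⟩

theorem hasExpansion_const (c : ℝ) : HasExpansion l T (fun _ => c) (C (C c)) j :=
  .of_eventuallyEq (coeffDegLE.algebraMap_mem c) (by simp)

theorem hasExpansion_inv : HasExpansion l T (fun k => (T k)⁻¹) X j :=
  .of_eventuallyEq X_mem_coeffDegLE (by simp)

theorem hasExpansion_log_div : HasExpansion l T (fun k => log (T k) / T k) (C X * X) j :=
  .of_eventuallyEq C_X_mul_X_mem_coeffDegLE (by simp [div_eq_mul_inv])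

namespace HasExpansion

theorem of_isBigO_sub (h : HasExpansion l T f V j)
    (hfg : (fun k => g k - f k) =O[l] fun k => (log (T k) / T k) ^ (j + 1)) :
    HasExpansion l T g V j :=
  ⟨h.mem, (hfg.add h.isBigO).congr (fun k => by ring) fun _ => rfl⟩

theorem congr (h : HasExpansion l T f V j) (hfg : f =ᶠ[l] g) : HasExpansion l T g V j :=
  ⟨h.mem, h.isBigO.congr' (hfg.mono fun k hk => by simp [hk]) EventuallyEq.rfl⟩

theorem add (hf : HasExpansion l T f V j) (hg : HasExpansion l T g W j) :
    HasExpansion l T (fun k => f k + g k) (V + W) j :=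
  ⟨add_mem hf.mem hg.mem, (hf.isBigO.add hg.isBigO).congr (fun k => by simp; ring) fun _ => rfl⟩

theorem sub (hf : HasExpansion l T f V j) (hg : HasExpansion l T g W j) :
    HasExpansion l T (fun k => f k - g k) (V - W) j :=
  ⟨sub_mem hf.mem hg.mem, (hf.isBigO.sub hg.isBigO).congr (fun k => by simp; ring) fun _ => rfl⟩

theorem isBigO_one (hT : Tendsto T l atTop) (h : HasExpansion l T f V j) :
    f =O[l] fun _ => (1 : ℝ) :=
  ((h.isBigO.trans (((tendsto_log_div_self hT).pow (j + 1)).isBigO_one ℝ)).add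
    (isBigO_evalLogInv_one hT h.mem)).congr (fun k => by ring) fun _ => rfl

theorem mul (hT : Tendsto T l atTop) (hf : HasExpansion l T f V j) (hg : HasExpansion l T g W j) :
    HasExpansion l T (fun k => f k * g k) (V * W) j := by
  refine ⟨mul_mem hf.mem hg.mem, ?_⟩
  have h := ((hf.isBigO_one hT).mul hg.isBigO).add
    ((isBigO_evalLogInv_one hT hg.mem).mul hf.isBigO)
  exact h.congr (fun k => by simp only [map_mul]; ring) fun k => by ring

theorem pow (hT : Tendsto T l atTop) (h : HasExpansion l T f V j) (n : ℕ) :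
    HasExpansion l T (fun k => f k ^ n) (V ^ n) j := by
  induction n with
  | zero => simpa using hasExpansion_const (l := l) (T := T) (j := j) 1
  | succ n ih => simpa [pow_succ] using ih.mul hT h

theorem aeval (hT : Tendsto T l atTop) (h : HasExpansion l T f V j) (p : ℝ[X]) :
    HasExpansion l T (fun k => p.eval (f k)) (aeval V p) j := by
  induction p using Polynomial.induction_on' with
  | add p q hp hq => simpa using hp.add hq
  | monomial n a => simpa using (hasExpansion_const a).mul hT (h.pow hT n)

theorem inv_mul (hT : Tendsto T l atTop) (h : HasExpansion l T f V j) :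
    HasExpansion l T (fun k => (T k)⁻¹ * f k) (X * V) (j + 1) :=
  ⟨mul_mem X_mem_coeffDegLE h.mem, ((isBigO_inv_log_div_self hT).mul h.isBigO).congr
    (fun k => by simp only [map_mul, evalLogInv_X]; ring) fun k => by ring⟩

theorem comp (hT : Tendsto T l atTop) {F : ℝ → ℝ} {p : ℝ[X]} {c : ℝ}
    (hF : (fun y => F y - p.eval y) =O[𝓝 c] fun y => (y - c) ^ (j + 1))
    (h : HasExpansion l T f V j) (hfc : (fun k => f k - c) =O[l] fun k => log (T k) / T k) :
    HasExpansion l T (fun k => F (f k)) (Polynomial.aeval V p) j := by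
  have hf : Tendsto f l (𝓝 c) :=
    tendsto_sub_nhds_zero_iff.1 (hfc.trans_tendsto (tendsto_log_div_self hT))
  exact (h.aeval hT p).of_isBigO_sub ((hF.comp_tendsto hf).trans (hfc.pow (j + 1)))

theorem exists_comp_of_contDiffOn (hT : Tendsto T l atTop) {F : ℝ → ℝ} {s : Set ℝ}
    (hs : IsOpen s) (hsc : Convex ℝ s) {c : ℝ} (hc : c ∈ s) (hF : ContDiffOn ℝ (j + 1) F s)
    (h : HasExpansion l T f V j) (hfc : (fun k => f k - c) =O[l] fun k => log (T k) / T k) :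
    ∃ W, HasExpansion l T (fun k => F (f k)) W j :=
  let ⟨_, hp⟩ := exists_isBigO_sub_eval_of_contDiffOn hs hsc hc hF
  ⟨_, h.comp hT hp hfc⟩

end HasExpansion

end Expansion

section Inversion

variable {ι : Type*} {l : Filter ι} {T u : ι → ℝ} {α β : ℝ} {P : ℝ[X]}

theorem tendsto_inv_mul_nhds_zero (hT : Tendsto T l atTop) (hα : 0 < α)
    (hu : Tendsto u l (𝓝 α⁻¹)) : Tendsto (fun k => (u k * T k)⁻¹) l (𝓝 0) :=
  tendsto_inv_atTop_zero.comp (hu.pos_mul_atTop (inv_pos.2 hα) hT)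

theorem isBigO_sub_inv_of_eq (hT : Tendsto T l atTop) (hα : 0 < α) (hP : 0 < P.eval 0)
    (hu : Tendsto u l (𝓝 α⁻¹))
    (hrel : ∀ᶠ k in l, α * u k = 1 + log (T k) / T k +
      (T k)⁻¹ * (β + log (u k) - log (P.eval (u k * T k)⁻¹))) :
    (fun k => u k - α⁻¹) =O[l] fun k => log (T k) / T k := by
  have hZ : Tendsto (fun k => β + log (u k) - log (P.eval (u k * T k)⁻¹)) l
      (𝓝 (β + log α⁻¹ - log (P.eval 0))) :=
    (tendsto_const_nhds.add (hu.log (inv_ne_zero hα.ne'))).sub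
      (((P.continuous.tendsto 0).comp (tendsto_inv_mul_nhds_zero hT hα hu)).log hP.ne')
  have h := (isBigO_refl (fun k => log (T k) / T k) l).add
    (((isBigO_inv_log_div_self hT).mul (hZ.isBigO_one ℝ)).congr_right fun k => mul_one _)
  refine (h.const_mul_left α⁻¹).congr' ?_ (Eventually.of_forall fun k => by simp)
  filter_upwards [hrel] with k hk
  rw [add_assoc 1, ← sub_eq_iff_eq_add'] at hk
  rw [← hk]
  field_simp

theorem HasExpansion.exists_succ_of_eq (hT : Tendsto T l atTop) (hα : 0 < α)
    (hP : 0 < P.eval 0)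
    (hu₀ : (fun k => u k - α⁻¹) =O[l] fun k => log (T k) / T k)
    (hrel : ∀ᶠ k in l, α * u k = 1 + log (T k) / T k +
      (T k)⁻¹ * (β + log (u k) - log (P.eval (u k * T k)⁻¹)))
    {V : ℝ[X][X]} {j : ℕ} (h : HasExpansion l T u V j) :
    ∃ W, HasExpansion l T u (C (C α⁻¹) + X * W) (j + 1) := by
  have hu : Tendsto u l (𝓝 α⁻¹) :=
    tendsto_sub_nhds_zero_iff.1 (hu₀.trans_tendsto (tendsto_log_div_self hT))
  have hlog : ContDiffOn ℝ (j + 1) log (Set.Ioi 0) :=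
    contDiffOn_log.mono fun x hx => ne_of_gt hx
  have hinv : ContDiffOn ℝ (j + 1) Inv.inv (Set.Ioi (0 : ℝ)) :=
    (contDiffOn_inv ℝ).mono fun x hx => ne_of_gt hx
  have hα' : α⁻¹ ∈ Set.Ioi 0 := inv_pos.2 hα
  obtain ⟨Wl, hlogu⟩ := h.exists_comp_of_contDiffOn hT isOpen_Ioi (convex_Ioi 0) hα' hlog hu₀
  obtain ⟨Wi, hinvu⟩ := h.exists_comp_of_contDiffOn hT isOpen_Ioi (convex_Ioi 0) hα' hinv hu₀
  have hw : HasExpansion l T (fun k => (u k * T k)⁻¹) (X * Wi) j :=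
    (hasExpansion_inv.mul hT hinvu).congr (.of_forall fun k => by simp [mul_comm])
  have hwq : (fun k => (u k * T k)⁻¹) =O[l] fun k => log (T k) / T k :=
    ((isBigO_inv_log_div_self hT).mul ((hu.inv₀ hα'.ne').isBigO_one ℝ)).congr
      (fun k => by simp [mul_comm]) fun k => mul_one _
  have hPw : (fun k => P.eval (u k * T k)⁻¹ - P.eval 0) =O[l] fun k => log (T k) / T k :=
    ((P.hasDerivAt 0).isBigO_sub.comp_tendsto (tendsto_inv_mul_nhds_zero hT hα hu)).trans
      (hwq.congr_left fun _ => (sub_zero _).symm)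
  obtain ⟨Wp, hlogP⟩ :=
    (hw.aeval hT P).exists_comp_of_contDiffOn hT isOpen_Ioi (convex_Ioi 0) hP hlog hPw
  have hrhs := (hasExpansion_const α⁻¹).mul hT <|
    ((hasExpansion_const 1).add hasExpansion_log_div).add
      ((((hasExpansion_const β).add hlogu).sub hlogP).inv_mul hT)
  refine ⟨C (C α⁻¹) * (C X + C (C β) + Wl - Wp), ?_⟩
  convert hrhs.congr ?_ using 1
  · simp only [map_one]; ring
  · filter_upwards [hrel] with k hk
    rw [← hk]
    field_simp

theorem exists_isBigO_sub_sum_of_eq (hT : Tendsto T l atTop) (hα : 0 < α) (hP : 0 < P.eval 0)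
    (hu : Tendsto u l (𝓝 α⁻¹))
    (hrel : ∀ᶠ k in l, α * u k = 1 + log (T k) / T k +
      (T k)⁻¹ * (β + log (u k) - log (P.eval (u k * T k)⁻¹))) (N : ℕ) :
    ∃ b : ℕ → ℝ[X], (∀ n, (b n).natDegree ≤ n) ∧ b 0 = C α⁻¹ ∧
      (fun k => u k - ∑ n ∈ range (N + 1), (b n).eval (log (T k)) / T k ^ n) =O[l]
        fun k => (log (T k) / T k) ^ (N + 1) := by
  have hu₀ := isBigO_sub_inv_of_eq hT hα hP hu hrel
  have hexp : ∀ j, ∃ W, HasExpansion l T u (C (C α⁻¹) + X * W) j := by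
    intro j
    induction j with
    | zero =>
      exact ⟨0, by simpa using HasExpansion.mk (coeffDegLE.algebraMap_mem α⁻¹) (by simpa using hu₀)⟩
    | succ j ih =>
      obtain ⟨W, hW⟩ := ih
      exact hW.exists_succ_of_eq hT hα hP hu₀ hrel
  obtain ⟨W, hW⟩ := hexp N
  refine ⟨(C (C α⁻¹) + X * W).coeff, mem_coeffDegLE.1 hW.mem, by simp, ?_⟩
  exact (hW.isBigO.add (isBigO_evalLogInv_sub_sum hT hW.mem (N + 1))).congr
    (fun k => by ring) fun _ => rfl

theorem tendsto_div_of_eq {L : ι → ℝ} (hP : 0 < P.eval 0) (hL : Tendsto L l atTop)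
    (hLT : ∀ᶠ k in l, T k = α * L k - β - log (L k) + log (P.eval (L k)⁻¹)) :
    Tendsto (fun k => T k / L k) l (𝓝 α) := by
  have hPL : Tendsto (fun k => log (P.eval (L k)⁻¹)) l (𝓝 (log (P.eval 0))) :=
    ((P.continuous.tendsto 0).comp (tendsto_inv_atTop_zero.comp hL)).log hP.ne'
  have h := (((tendsto_const_nhds (x := α)).sub ((tendsto_const_nhds (x := β)).div_atTop hL)).sub
    (tendsto_log_div_self hL)).add (hPL.div_atTop hL)
  rw [sub_zero, sub_zero, add_zero] at h
  refine h.congr' ?_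
  filter_upwards [hLT, hL.eventually_gt_atTop 0] with k hk hL0
  rw [hk]
  field_simp

theorem exists_expansion_of_eq {L : ι → ℝ} (hα : 0 < α) (hP : 0 < P.eval 0)
    (hL : Tendsto L l atTop)
    (hLT : ∀ᶠ k in l, T k = α * L k - β - log (L k) + log (P.eval (L k)⁻¹)) (N : ℕ) :
    ∃ b : ℕ → ℝ[X], (∀ n, (b n).natDegree ≤ n) ∧ b 0 = C α⁻¹ ∧ ∃ c > 0, ∀ᶠ k in l, ∃ E,
      |E| ≤ c * (log (T k) / T k) ^ (N + 1) ∧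
      L k = T k * (∑ n ∈ range (N + 1), (b n).eval (log (T k)) / T k ^ n + E) := by
  have hTL := tendsto_div_of_eq hP hL hLT
  have hT : Tendsto T l atTop := (hL.atTop_mul_pos hα hTL).congr' <| by
    filter_upwards [hL.eventually_gt_atTop 0] with k hk
    field_simp
  have hrel : ∀ᶠ k in l, α * (L k / T k) = 1 + log (T k) / T k +
      (T k)⁻¹ * (β + log (L k / T k) - log (P.eval (L k / T k * T k)⁻¹)) := by
    filter_upwards [hLT, hL.eventually_gt_atTop 0, hT.eventually_gt_atTop 0] with k hk hL0 hT0
    rw [div_mul_cancel₀ _ hT0.ne', log_div hL0.ne' hT0.ne']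
    field_simp
    rw [one_div]
    linarith
  obtain ⟨b, hdeg, hb0, hb⟩ := exists_isBigO_sub_sum_of_eq hT hα hP
    ((hTL.inv₀ hα.ne').congr fun k => inv_div _ _) hrel N
  obtain ⟨c, hc, hcb⟩ := hb.exists_pos
  refine ⟨b, hdeg, hb0, c, hc, ?_⟩
  filter_upwards [hcb.bound, hT.eventually_ge_atTop 1] with k hk hT1
  rw [norm_pow, Real.norm_eq_abs, Real.norm_eq_abs,
    abs_of_nonneg (div_nonneg (log_nonneg hT1) (by linarith))] at hk
  exact ⟨_, hk, by rw [add_sub_cancel, mul_div_cancel₀ _ (by linarith)]⟩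

end Inversion

theorem eventually_log_rpow_div_mul_eq (α : ℝ) {σ : ℝ} (hσ : 0 < σ) {P : ℝ[X]}
    (hP : 0 < P.eval 0) :
    ∀ᶠ k in atTop, log (k ^ α / (σ * log k) * P.eval (log k)⁻¹) =
      α * log k - log σ - log (log k) + log (P.eval (log k)⁻¹) := by
  have hS : ∀ᶠ k in atTop, 0 < P.eval (log k)⁻¹ :=
    ((P.continuous.tendsto 0).comp (tendsto_inv_atTop_zero.comp tendsto_log_atTop)).eventually
      (lt_mem_nhds hP)
  filter_upwards [eventually_gt_atTop 1, hS] with k hk hSk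
  have hlogk : 0 < log k := log_pos hk
  rw [log_mul (by positivity) hSk.ne', log_div (by positivity) (by positivity),
    log_rpow (by linarith), log_mul hσ.ne' hlogk.ne']
  ring

end LogExpansion

theorem stmt17 (σ : ℝ) (hσ : 1/2 < σ) (hσ1 : σ < 1) (N : ℕ)
    (a : ℕ → ℝ) (ha₀ : 0 < a 0) :
    ∃ b : ℕ → Polynomial ℝ,
      (∀ n, n ≤ N → (b n).natDegree ≤ n) ∧
      b 0 = Polynomial.C (σ / (1-σ)) ∧
      ∃ C > (0:ℝ), ∃ k₀ : ℝ, ∀ k τ : ℝ, k₀ ≤ k → 0 < τ →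
        τ = k ^ (1/σ - 1) / (σ * Real.log k)
              * ∑ n ∈ Finset.range (N+2), a n / (Real.log k) ^ n →
        ∃ E : ℝ,
          |E| ≤ C * (Real.log (Real.log τ) / Real.log τ) ^ (N+1) ∧
          Real.log k = Real.log τ *
            (∑ n ∈ Finset.range (N+1),
                (b n).eval (Real.log (Real.log τ)) / (Real.log τ) ^ n + E) := by
  have hσ₀ : 0 < σ := by linarith
  have hα : 0 < 1/σ - 1 := by rw [sub_pos, lt_div_iff₀ hσ₀]; linarith
  set P : Polynomial ℝ := ∑ n ∈ Finset.range (N + 2), Polynomial.C (a n) * Polynomial.X ^ n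
  have hP : ∀ x : ℝ, P.eval x⁻¹ = ∑ n ∈ Finset.range (N + 2), a n / x ^ n := fun x => by
    simp [P, Polynomial.eval_finsetSum, div_eq_mul_inv]
  have hP₀ : P.eval 0 = a 0 := by
    simpa [P, Polynomial.eval_finsetSum] using Finset.sum_range_succ' (fun n => a n * 0 ^ n) (N + 1)
  obtain ⟨b, hdeg, hb0, C, hC, hev⟩ := LogExpansion.exists_expansion_of_eq hα (hP₀ ▸ ha₀)
    tendsto_log_atTop (LogExpansion.eventually_log_rpow_div_mul_eq _ hσ₀ (hP₀ ▸ ha₀)) N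
  obtain ⟨k₀, hk₀⟩ := Filter.eventually_atTop.1 hev
  refine ⟨b, fun n _ => hdeg n, ?_, C, hC, k₀, fun k τ hk _ hτ => ?_⟩
  · rw [hb0, show (1/σ - 1)⁻¹ = σ / (1 - σ) by field_simp]
  · rw [← hP] at hτ
    exact hτ ▸ hk₀ k hk
end
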